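/- arXiv:2507.13050 — 5 statements merged into one kernel-verified Lean document; each statement's English description precedes it below -/
import Mathlib

section
/- Let F be a free group of rank m ≥ 2 and φ ∈ Aut(F) with [φ] of finite order k in Out(F), so φ^k = ad_{f₀⁻¹} for some f₀ ∈ F. Then the center of the mapping torus F ⋊_φ ⟨t⟩ is the infinite cyclic subgroup generated by t^k f₀. -/
open SemidirectProduct Multiplicative

/-- The mapping torus `F ⋊_φ ⟨t⟩` of an automorphism `φ` of `F`: the semidirect
product `F ⋊ ℤ` in which the stable letter `t` satisfies `t⁻¹ x t = φ x`. -/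
abbrev MappingTorus {F : Type*} [Group F] (φ : MulAut F) : Type _ :=
  SemidirectProduct F (Multiplicative ℤ) ((zpowersHom (MulAut F)) φ⁻¹)

/-- The stable letter `t` of the mapping torus. -/
def stableLetter {F : Type*} [Group F] (φ : MulAut F) : MappingTorus φ :=
  inr (ofAdd 1)

/-! Free groups of rank at least two have trivial centre, so `MulAut.conj` is injective on `F`
and `φ ^ k = conj f₀` forces `φ f₀ = f₀` (conjugating by `φ` gives `conj (φ f₀) = φ ^ k`).
An element `f t^n` of the mapping torus is central exactly when `φ ^ n = conj f` and `φ f = f`;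
so `z = t^k f₀` is central, and for central `g` with `t`-exponent `n`, the central element
`g z^(-(n / k))` has exponent `n % k`. Minimality of `k` makes this exponent vanish, and a central
element with exponent `0` lies in the centre of `F`, hence is `1`. -/

namespace FreeGroup

variable {α : Type*}

theorem toWord_of_mul_of_toWord_eq_cons [DecidableEq α] {a : α} {w : FreeGroup α} {x : α × Bool}
    {L : List (α × Bool)} (hw : w.toWord = x :: L) (hx : x.1 ≠ a) :
    (of a * w).toWord = (a, true) :: x :: L := by
  rw [toWord_mul, toWord_of, hw, List.singleton_append]
  refine IsReduced.reduce_eq (isReduced_cons_cons.mpr ⟨fun h ↦ absurd h.symm hx, ?_⟩)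
  exact hw ▸ isReduced_toWord

theorem center_eq_bot [Nontrivial α] : Subgroup.center (FreeGroup α) = ⊥ := by
  classical
  refine (Subgroup.eq_bot_iff_forall _).mpr fun w hw ↦ ?_
  by_contra hne
  obtain ⟨x, L, hL⟩ := List.exists_cons_of_ne_nil (mt toWord_eq_nil_iff.mp hne)
  obtain ⟨a, ha⟩ := exists_ne x.1
  -- `of a * w` is the reduced word `a :: x :: L`, while `w * of a` is a sublist of
  -- `x :: L ++ [a]` of the same length; the two first letters then have to agree.
  have hsub := toWord_mul_sublist w (of a)
  rw [← Subgroup.mem_center_iff.mp hw, toWord_of_mul_of_toWord_eq_cons hL ha.symm, hL,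
    toWord_of] at hsub
  have := hsub.eq_of_length (by simp)
  simp only [List.cons_append, List.cons.injEq] at this
  exact ha (congrArg Prod.fst this.1)

end FreeGroup

namespace MulAut

variable {G : Type*} [Group G]

theorem conj_eq_one_iff_mem_center {x : G} : conj x = 1 ↔ x ∈ Subgroup.center G := by
  simp only [MulEquiv.ext_iff, conj_apply, one_apply, mul_inv_eq_iff_eq_mul, Subgroup.mem_center_iff]
  exact forall_congr' fun _ ↦ eq_comm

theorem conj_injective_of_center_eq_bot (hG : Subgroup.center G = ⊥) :
    Function.Injective (conj : G →* MulAut G) :=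
  (injective_iff_map_eq_one _).mpr fun x hx ↦ by
    rwa [conj_eq_one_iff_mem_center, hG, Subgroup.mem_bot] at hx

theorem zpow_apply_eq_self {φ : MulAut G} {x : G} (h : φ x = x) (n : ℤ) : (φ ^ n) x = x :=
  MulAction.mem_fixedBy_zpow (α := G) (g := φ) h n

theorem conj_apply_eq_mul_conj_mul_inv (φ : MulAut G) (x : G) :
    conj (φ x) = φ * conj x * φ⁻¹ := by
  ext y
  simp

theorem apply_eq_self_of_zpow_eq_conj (hG : Subgroup.center G = ⊥) {φ : MulAut G} {x : G} {n : ℤ}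
    (h : φ ^ n = conj x) : φ x = x :=
  conj_injective_of_center_eq_bot hG <| by
    rw [conj_apply_eq_mul_conj_mul_inv, ← h, (Commute.self_zpow φ n).eq, mul_inv_cancel_right]

end MulAut

theorem SemidirectProduct.right_zpow {N G : Type*} [Group N] [Group G] {ψ : G →* MulAut N}
    (g : N ⋊[ψ] G) (n : ℤ) : (g ^ n).right = g.right ^ n :=
  map_zpow rightHom g n

namespace MappingTorus

variable {F : Type*} [Group F] (φ : MulAut F)

theorem stableLetter_pow (n : ℕ) : stableLetter φ ^ n = inr (ofAdd (n : ℤ)) := by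
  rw [stableLetter, ← map_pow, ← ofAdd_nsmul, nsmul_one]

theorem stableLetter_pow_mul_inl {x : F} (hx : φ x = x) (n : ℕ) :
    stableLetter φ ^ n * inl x = ⟨x, ofAdd (n : ℤ)⟩ := by
  ext
  · simpa [stableLetter_pow] using MulAut.zpow_apply_eq_self hx (-n)
  · simp [stableLetter_pow]

theorem mem_center_iff {g : MappingTorus φ} :
    g ∈ Subgroup.center (MappingTorus φ) ↔
      φ ^ toAdd g.right = MulAut.conj g.left ∧ φ g.left = g.left := by
  rw [Subgroup.mem_center_iff]
  constructor
  · intro hg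
    refine ⟨inv_inj.mp (MulEquiv.ext fun y ↦ ?_), ?_⟩
    · have := congrArg SemidirectProduct.left (hg (inl y))
      simp only [mul_left, left_inl, right_inl, map_one, MulAut.one_apply, zpowersHom_apply,
        inv_zpow] at this
      rw [MulAut.conj_inv_apply, mul_assoc, this, inv_mul_cancel_left]
    · have := congrArg SemidirectProduct.left (hg (stableLetter φ))
      simp only [stableLetter, mul_left, left_inr, right_inr, zpowersHom_apply, toAdd_ofAdd,
        zpow_one, one_mul, map_one, mul_one, MulAut.inv_apply] at this
      exact ((MulEquiv.symm_apply_eq φ).mp this).symm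
  · rintro ⟨hconj, hfix⟩ h
    ext
    · simp only [mul_left, zpowersHom_apply, inv_zpow]
      rw [hconj, MulAut.conj_inv_apply, ← zpow_neg, MulAut.zpow_apply_eq_self hfix]
      group
    · exact mul_comm h.right g.right

theorem eq_one_of_mem_center_of_right_eq_one (hF : Subgroup.center F = ⊥) {g : MappingTorus φ}
    (hg : g ∈ Subgroup.center (MappingTorus φ)) (hr : g.right = 1) : g = 1 := by
  have hconj := ((mem_center_iff φ).mp hg).1
  rw [hr, toAdd_one, zpow_zero, eq_comm, MulAut.conj_eq_one_iff_mem_center, hF,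
    Subgroup.mem_bot] at hconj
  ext <;> simp [hconj, hr]

end MappingTorus

open MappingTorus in
/-- for `F` free of rank `m ≥ 2` and `[φ]` of order `k` in `Out(F)`,
with `φ^k = ad_{f₀⁻¹}`, the center of `F ⋊_φ ⟨t⟩` is the infinite cyclic
subgroup generated by `t^k f₀`. -/
theorem center_eq_zpowers {m : ℕ} (hm : 2 ≤ m)
    (φ : MulAut (FreeGroup (Fin m))) (f₀ : FreeGroup (Fin m)) (k : ℕ) (hk : 1 ≤ k)
    (hφk : φ ^ k = MulAut.conj f₀)
    (hmin : ∀ j : ℕ, 1 ≤ j → j < k → ¬ ∃ g, φ ^ j = MulAut.conj g) :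
    Subgroup.center (MappingTorus φ)
        = Subgroup.zpowers ((stableLetter φ) ^ k * inl f₀) ∧
      ∀ n : ℤ, ((stableLetter φ) ^ k * inl f₀) ^ n = 1 → n = 0 := by
  have hF : Subgroup.center (FreeGroup (Fin m)) = ⊥ :=
    haveI := Fin.nontrivial_iff_two_le.mpr hm
    FreeGroup.center_eq_bot
  have hfix : φ f₀ = f₀ := MulAut.apply_eq_self_of_zpow_eq_conj hF (n := k) (by rwa [zpow_natCast])
  set z := stableLetter φ ^ k * inl f₀
  have hz : z = ⟨f₀, ofAdd (k : ℤ)⟩ := stableLetter_pow_mul_inl φ hfix k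
  have hzc : z ∈ Subgroup.center (MappingTorus φ) :=
    (mem_center_iff φ).mpr ⟨by rwa [hz, toAdd_ofAdd, zpow_natCast], by rwa [hz]⟩
  have hzr (n : ℤ) : toAdd (z ^ n).right = n * k := by simp [right_zpow, hz]
  have hk0 : (0 : ℤ) < k := by exact_mod_cast hk
  refine ⟨le_antisymm (fun g hg ↦ ?_) (Subgroup.zpowers_le.mpr hzc), fun n hn ↦ ?_⟩
  · set q := toAdd g.right / k
    have hc : g * z ^ (-q) ∈ Subgroup.center (MappingTorus φ) := mul_mem hg (zpow_mem hzc _)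
    have hr : toAdd (g * z ^ (-q)).right = toAdd g.right % k := by
      rw [mul_right, toAdd_mul, hzr, Int.emod_def]
      ring
    have hr0 : toAdd g.right % k = 0 := by
      by_contra hne
      have := Int.emod_nonneg (toAdd g.right) hk0.ne'
      refine hmin (toAdd g.right % k).toNat (by omega)
        (by have := Int.emod_lt_of_pos (toAdd g.right) hk0; omega) ⟨(g * z ^ (-q)).left, ?_⟩
      rw [← zpow_natCast, Int.toNat_of_nonneg this, ← hr]
      exact ((mem_center_iff φ).mp hc).1
    have := eq_one_of_mem_center_of_right_eq_one φ hF hc <| by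
      rw [← ofAdd_toAdd (g * z ^ (-q)).right, hr, hr0, ofAdd_zero]
    exact ⟨q, (mul_inv_eq_one.mp (by rwa [zpow_neg] at this)).symm⟩
  · have := hzr n
    rw [hn, one_right, toAdd_one] at this
    exact (mul_eq_zero.mp this.symm).resolve_right hk0.ne'
end

section
/- Let F be a free group of rank m ≥ 2, φ ∈ Aut(F) with [φ] of finite order k > 1 in Out(F), and Q = (F ⋊_φ ⟨t⟩)/Z the quotient by the center. Then the center of Q is trivial. -/
open SemidirectProduct Multiplicative

namespace FreeGroupCenterAux

open FreeGroup

variable {α : Type*} [DecidableEq α]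

/-- Prepending a non-cancelling letter to a reduced word stays reduced. -/
lemma reduce_cons_eq {c : α × Bool} {L : List (α × Bool)}
    (hL : reduce L = L)
    (h : ∀ hd tl, L = hd :: tl → ¬(c.1 = hd.1 ∧ c.2 = !hd.2)) :
    reduce (c :: L) = c :: L := by
  rw [reduce.cons, hL]
  cases L with
  | nil => rfl
  | cons hd tl =>
    simp only
    rw [if_neg (h hd tl rfl)]

lemma invRev_concat (L : List (α × Bool)) (c : α × Bool) :
    invRev (L ++ [c]) = (c.1, !c.2) :: invRev L := by
  simp [invRev]

lemma invRev_cons (c : α × Bool) (L : List (α × Bool)) :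
    invRev (c :: L) = invRev L ++ [(c.1, !c.2)] := by
  simp [invRev]

/-- The center of a free group on at least two generators is trivial. -/
lemma center_freeGroup_eq_bot {m : ℕ} (hm : 2 ≤ m) :
    Subgroup.center (FreeGroup (Fin m)) = ⊥ := by
  rw [eq_bot_iff]
  intro x hx
  rw [Subgroup.mem_bot]
  by_contra hx1
  -- the reduced word of x is nonempty
  have hL : x.toWord ≠ [] := fun h => hx1 (toWord_eq_nil_iff.mp h)
  obtain ⟨hd, tl, hcons⟩ := List.exists_cons_of_ne_nil hL
  obtain ⟨L', a, hconcat⟩ := (List.eq_nil_or_concat x.toWord).resolve_left hL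
  -- pick a generator index different from the head index
  have h0 : (0 : ℕ) < m := by omega
  have h1 : (1 : ℕ) < m := by omega
  set j : Fin m := if hd.1 = ⟨0, h0⟩ then ⟨1, h1⟩ else ⟨0, h0⟩ with hj
  have hij : j ≠ hd.1 := by
    rw [hj]
    split
    · rename_i h; rw [h]; intro hcontra
      exact absurd (congrArg Fin.val hcontra) (by simp)
    · rename_i h; exact fun hcontra => h hcontra.symm
  -- pick the sign so as not to cancel with the last letter
  set s : Bool := if a.1 = j then a.2 else true with hs
  set c : (Fin m) × Bool := (j, s) with hc
  set y : FreeGroup (Fin m) := FreeGroup.mk [c] with hy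
  -- y * x is reduced as a concatenation
  have hyx : (y * x).toWord = c :: x.toWord := by
    conv_lhs => rw [hy, ← mk_toWord (x := x), mul_mk]
    rw [List.singleton_append, toWord_mk]
    refine reduce_cons_eq x.reduce_toWord ?_
    intro hd' tl' h' hcontra
    rw [hcons] at h'
    injection h' with e1 _
    subst e1
    exact hij hcontra.1
  -- x * y is reduced as a concatenation
  have hxy : (x * y).toWord = x.toWord ++ [c] := by
    have hconcat' : x.toWord = L' ++ [a] := by simpa using hconcat
    have h1' : invRev [c] = [(j, !s)] := by simp [invRev, hc]
    have hinv : ((x * y)⁻¹).toWord = (j, !s) :: invRev x.toWord := by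
      have hxinv : x⁻¹ = FreeGroup.mk (invRev x.toWord) := by rw [← toWord_inv, mk_toWord]
      have hyinv : y⁻¹ = FreeGroup.mk [(j, !s)] := by rw [hy, inv_mk, h1']
      rw [mul_inv_rev, hxinv, hyinv, mul_mk, List.singleton_append, toWord_mk]
      have hredinv : reduce (invRev x.toWord) = invRev x.toWord := by
        rw [reduce_invRev, x.reduce_toWord]
      refine reduce_cons_eq hredinv ?_
      intro hd' tl' h' hcontra
      rw [hconcat', invRev_concat] at h'
      injection h' with e1 _
      subst e1
      obtain ⟨e1, e2⟩ := hcontra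
      simp only at e1 e2
      rw [Bool.not_not] at e2
      rw [hs, if_pos e1.symm] at e2
      simp at e2
    have := congrArg invRev hinv
    rw [← toWord_inv, inv_inv, invRev_cons, invRev_invRev, Bool.not_not] at this
    exact this
  -- centrality gives a contradiction
  have hcomm : x * y = y * x := (Subgroup.mem_center_iff.mp hx y).symm
  have : x.toWord ++ [c] = c :: x.toWord := by rw [← hxy, hcomm, hyx]
  rw [hcons] at this
  injection this with e1 _
  exact hij (congrArg Prod.fst e1).symm

end FreeGroupCenterAux

/-- for `F` free of rank `m ≥ 2` and `[φ]` of finite order `k > 1`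
in `Out(F)`, the quotient `Q = (F ⋊_φ ⟨t⟩)/Z` has trivial center. -/
theorem quotient_by_center_centerless {m : ℕ} (hm : 2 ≤ m)
    (φ : MulAut (FreeGroup (Fin m))) (k : ℕ) (hk : 1 < k)
    (hφk : ∃ f₀, φ ^ k = MulAut.conj f₀)
    (hmin : ∀ j : ℕ, 1 ≤ j → j < k → ¬ ∃ g, φ ^ j = MulAut.conj g) :
    Subgroup.center (MappingTorus φ ⧸ Subgroup.center (MappingTorus φ)) = ⊥ := by
  set G := MappingTorus φ
  set Z := Subgroup.center G
  -- key fact: a central element of `G` in the kernel of `rightHom` is trivial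
  have key : ∀ z : G, z ∈ Z → rightHom z = 1 → z = 1 := by
    intro z hz hz1
    have : z ∈ (inl : FreeGroup (Fin m) →* G).range := by
      rw [range_inl_eq_ker_rightHom]; exact hz1
    obtain ⟨w, rfl⟩ := this
    have hw : w ∈ Subgroup.center (FreeGroup (Fin m)) := by
      rw [Subgroup.mem_center_iff]
      intro v
      apply inl_injective (φ := (zpowersHom (MulAut (FreeGroup (Fin m)))) φ⁻¹)
      rw [map_mul, map_mul]
      exact Subgroup.mem_center_iff.mp hz (inl v)
    rw [FreeGroupCenterAux.center_freeGroup_eq_bot hm, Subgroup.mem_bot] at hw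
    rw [hw, map_one]
  rw [eq_bot_iff]
  intro q hq
  rw [Subgroup.mem_bot]
  induction q using QuotientGroup.induction_on with
  | H g =>
    rw [QuotientGroup.eq_one_iff]
    rw [Subgroup.mem_center_iff]
    intro h
    have hcomm : ((h : G ⧸ Z) * (g : G ⧸ Z)) = (g : G ⧸ Z) * (h : G ⧸ Z) :=
      Subgroup.mem_center_iff.mp hq _
    rw [← QuotientGroup.mk_mul, ← QuotientGroup.mk_mul, QuotientGroup.eq] at hcomm
    have hr : rightHom ((h * g)⁻¹ * (g * h)) = 1 := by
      rw [map_mul, map_inv, map_mul, map_mul]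
      rw [mul_comm (rightHom h) (rightHom g)]
      group
    exact inv_mul_eq_one.mp (key _ hcomm hr)
end

section
/- Let G = F ⋊_φ ℤ with F free of rank m ≥ 2 and [φ] of finite order k in Out(F), with center generated by x = t^k f₀. Suppose ψ ∈ Aut(G) satisfies ψ(x) = x and for every y ∈ G there exists r ∈ ℤ with ψ(y) = y x^r, and ψ is not the identity. Then ψ has infinite order in Out(G); in fact there is y ∈ G such that for every n ≥ 1, ψ^n(y) is not conjugate to y. -/
open SemidirectProduct Multiplicative

/-- `ψ` is an inner automorphism. -/
def IsInner {G : Type*} [Group G] (ψ : MulAut G) : Prop :=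
  ∃ g : G, ψ = MulAut.conj g

/-- let `G = F ⋊_φ ℤ` with `F` free of rank `m ≥ 2`, `[φ]` of
order `k` in `Out(F)`, and center generated by `x = t^k f₀`. If `ψ ∈ Aut(G)`
fixes `x`, satisfies `ψ(y) ∈ y⟨x⟩` for all `y`, and is not the identity, then
`ψ` has infinite order in `Out(G)`; in fact some `y` is conjugate to no
`ψ^n(y)`, `n ≥ 1`. -/
theorem central_twist_infinite_order {m : ℕ} (hm : 2 ≤ m)
    (φ : MulAut (FreeGroup (Fin m))) (f₀ : FreeGroup (Fin m)) (k : ℕ) (hk : 1 ≤ k)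
    (hφk : φ ^ k = MulAut.conj f₀)
    (hmin : ∀ j : ℕ, 1 ≤ j → j < k → ¬ ∃ g, φ ^ j = MulAut.conj g)
    (hcenter : Subgroup.center (MappingTorus φ)
      = Subgroup.zpowers ((stableLetter φ) ^ k * inl f₀))
    (ψ : MulAut (MappingTorus φ))
    (hψx : ψ ((stableLetter φ) ^ k * inl f₀) = (stableLetter φ) ^ k * inl f₀)
    (hψ : ∀ y : MappingTorus φ,
      ∃ r : ℤ, ψ y = y * ((stableLetter φ) ^ k * inl f₀) ^ r)
    (hne : ψ ≠ 1) :
    (∀ n : ℕ, 1 ≤ n → ¬ IsInner (ψ ^ n)) ∧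
      ∃ y : MappingTorus φ, ∀ n : ℕ, 1 ≤ n → ¬ IsConj ((ψ ^ n) y) y := by
  set x : MappingTorus φ := (stableLetter φ) ^ k * inl f₀ with hx
  set π : MappingTorus φ →* Multiplicative ℤ := rightHom with hπ
  have hπx : π x = ofAdd (k : ℤ) := by
    rw [hx, hπ, map_mul, map_pow]
    simp [stableLetter, ← ofAdd_nsmul]
  have hy : ∃ y : MappingTorus φ, ψ y ≠ y := by
    by_contra h
    push_neg at h
    exact hne (MulEquiv.ext fun y => (h y).trans rfl)
  obtain ⟨y, hy⟩ := hy
  obtain ⟨r, hr⟩ := hψ y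
  have hr0 : r ≠ 0 := by
    rintro rfl
    simp at hr
    exact hy hr
  have key : ∀ n : ℕ, (ψ ^ n) y = y * x ^ ((n : ℤ) * r) := by
    intro n
    induction n with
    | zero => simp
    | succ n ih =>
      have h1 : (ψ ^ (n + 1)) y = ψ ((ψ ^ n) y) := by
        rw [pow_succ']
        rfl
      rw [h1, ih, map_mul, hr, map_zpow, hψx, mul_assoc, ← zpow_add]
      have h2 : r + (n : ℤ) * r = ((n + 1 : ℕ) : ℤ) * r := by push_cast; ring
      rw [h2]
  have main : ∀ n : ℕ, 1 ≤ n → ¬ IsConj ((ψ ^ n) y) y := by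
    intro n hn hc
    rw [isConj_iff] at hc
    obtain ⟨c, hc⟩ := hc
    have hπeq : π ((ψ ^ n) y) = π y := by
      have := congrArg π hc
      simp only [map_mul, map_inv] at this
      rw [mul_comm (π c), mul_assoc, mul_inv_cancel, mul_one] at this
      exact this
    rw [key n, map_mul, map_zpow, hπx] at hπeq
    have h1 : (ofAdd (k : ℤ)) ^ ((n : ℤ) * r) = 1 := by
      refine mul_left_cancel (a := π y) ?_
      rw [mul_one]; exact hπeq
    have h2 := congrArg toAdd h1
    simp [← ofAdd_zsmul] at h2
    rcases h2 with h | h | h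
    · exact Nat.one_le_iff_ne_zero.mp hk h
    · exact Nat.one_le_iff_ne_zero.mp hn h
    · exact hr0 h
  refine ⟨fun n hn hinn => ?_, ⟨y, main⟩⟩
  obtain ⟨g, hg⟩ := hinn
  refine main n hn ?_
  rw [hg, MulAut.conj_apply]
  exact isConj_iff.mpr ⟨g⁻¹, by group⟩
end

section
/- Let G = ⟨f, t | t⁻¹ f t = f⁻¹⟩ ≅ ℤ ⋊ ℤ (the Klein bottle group). The subgroup H = ⟨f, t⁴⟩ is a characteristic subgroup of finite index in G. -/
open SemidirectProduct Multiplicative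

/-- The Klein bottle group `⟨f, t ∣ t⁻¹ f t = f⁻¹⟩ ≅ ℤ ⋊ ℤ`: the mapping torus
of the inversion automorphism of `ℤ`. -/
abbrev KleinBottle : Type :=
  MappingTorus (MulEquiv.inv (Multiplicative ℤ))

/-- The generator `f` of the fibre `ℤ` of the Klein bottle group. -/
def fKB : KleinBottle := inl (ofAdd 1)

/-- The stable letter `t` of the Klein bottle group. -/
def tKB : KleinBottle := stableLetter _

lemma klein_relation : tKB * fKB * tKB⁻¹ = fKB⁻¹ := by
  ext <;> simp [tKB, fKB, stableLetter] <;> rfl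

lemma inl_eq_fKB_zpow (a : Multiplicative ℤ) : (inl a : KleinBottle) = fKB ^ (toAdd a) := by
  rw [fKB, ← map_zpow]
  congr 1
  simp [← ofAdd_zsmul]

lemma psi_fKB (ψ : KleinBottle →* Multiplicative ℤ) : ψ fKB = 1 := by
  have h := congrArg (fun x => toAdd (ψ x)) klein_relation
  simp only [map_mul, map_inv, toAdd_mul, toAdd_inv] at h
  have h0 : toAdd (ψ fKB) = 0 := by omega
  rw [← ofAdd_toAdd (ψ fKB), h0, ofAdd_zero]

lemma psi_eq (ψ : KleinBottle →* Multiplicative ℤ) :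
    ψ = (zpowersHom (Multiplicative ℤ) (ψ tKB)).comp rightHom := by
  apply SemidirectProduct.hom_ext
  · apply MonoidHom.ext_mint
    simp only [MonoidHom.comp_apply, rightHom_inl, map_one]
    exact psi_fKB ψ
  · apply MonoidHom.ext_mint
    simp only [MonoidHom.comp_apply, rightHom_inr, zpowersHom_apply, toAdd_ofAdd, zpow_one]
    rfl

lemma mem_H_iff (g : KleinBottle) :
    g ∈ Subgroup.closure {fKB, tKB ^ 4} ↔ (4 : ℤ) ∣ toAdd (rightHom g) := by
  constructor
  · intro hg
    induction hg using Subgroup.closure_induction with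
    | mem x hx =>
      rcases hx with rfl | rfl
      · simp [fKB]
      · rw [map_pow]
        simp [tKB, stableLetter, toAdd_pow]
    | one => simp
    | mul x y _ _ hx hy => simpa [map_mul, toAdd_mul] using dvd_add hx hy
    | inv x _ hx => simpa using hx.neg_right
  · rintro ⟨k, hk⟩
    rw [← inl_left_mul_inr_right g]
    apply mul_mem
    · rw [inl_eq_fKB_zpow]
      exact Subgroup.zpow_mem _ (Subgroup.subset_closure (by simp)) _
    · have : (inr g.right : KleinBottle) = (tKB ^ 4) ^ k := by
        rw [tKB, stableLetter, ← map_pow, ← map_zpow]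
        congr 1
        rw [← ofAdd_toAdd g.right]
        have : rightHom g = g.right := rfl
        rw [this] at hk
        rw [hk]
        apply Multiplicative.toAdd.injective
        simp [toAdd_zpow, toAdd_pow, mul_comm]
      rw [this]
      exact Subgroup.zpow_mem _ (Subgroup.subset_closure (by simp)) _

/-- in the Klein bottle group `G = ⟨f, t ∣ t⁻¹ f t = f⁻¹⟩`, the
subgroup `H = ⟨f, t⁴⟩` is characteristic and of finite index. -/
theorem klein_bottle_characteristic_subgroup :
    (Subgroup.closure {fKB, tKB ^ 4}).Characteristic ∧
      (Subgroup.closure {fKB, tKB ^ 4}).FiniteIndex := by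
  constructor
  · rw [Subgroup.characteristic_iff_map_le]
    intro σ
    rintro _ ⟨g, hg, rfl⟩
    replace hg := (mem_H_iff g).mp hg
    rw [mem_H_iff]
    have key := DFunLike.congr_fun (psi_eq (rightHom.comp σ.toMonoidHom)) g
    simp only [MonoidHom.comp_apply, zpowersHom_apply] at key
    rw [key, toAdd_zpow]
    rcases hg with ⟨k, hk⟩
    exact ⟨toAdd (rightHom (σ.toMonoidHom tKB)) * k, by rw [hk, smul_eq_mul]; ring⟩
  · have hker : Subgroup.closure {fKB, tKB ^ 4}
        = ((AddMonoidHom.toMultiplicative (Int.castAddHom (ZMod 4))).comp rightHom).ker := by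
      ext g
      rw [mem_H_iff, MonoidHom.mem_ker, MonoidHom.comp_apply]
      show _ ↔ ofAdd ((toAdd (rightHom g) : ℤ) : ZMod 4) = 1
      rw [ofAdd_eq_one, ZMod.intCast_zmod_eq_zero_iff_dvd]
      norm_num
    rw [hker]
    infer_instance
end

section
/- Let F be a free group, φ ∈ Aut(F), and suppose P ≤ F is a non-trivial subgroup with φ^l(P) = a⁻¹ P a for some a ∈ F and l ≥ 1, and suppose (ad_{γ} ∘ φ^k) restricts to the identity on P for some γ ∈ F and some multiple k of l. Then the outer class of the automorphism ad_{a⁻¹} ∘ φ^l restricted to P has finite order (dividing k/l) in Out(P), provided P equals its own normalizer-intersection in the sense that any element of F conjugating P to itself and acting as (ad_{a⁻¹} ∘ φ^l)^{k/l} inverse lies in P. -/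
/-!
Write `ψ = ad_{a⁻¹} ∘ φ^l`. Since inner automorphisms form a normal subgroup of `Aut(F)`,
`ψ^(k/l)` differs from `φ^k` by an inner automorphism `ad_{b⁻¹}`, and on `P` the latter is
`ad_{γ⁻¹}`, so `ψ^(k/l)` acts on `P` as conjugation by `c = bγ`. As `ψ` maps `P` onto itself,
so does conjugation by `c`, whence `c ∈ P` and `ψ^(k/l)` is inner on `P`.
-/

open Pointwise

namespace MulAut

variable {G : Type*} [Group G]

theorem mul_conj (f : MulAut G) (b : G) : f * conj b = conj (f b) * f := by
  ext x
  simp [conj_apply]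

theorem exists_conj_mul_pow_eq (a : G) (f : MulAut G) (m : ℕ) :
    ∃ b, (conj a * f) ^ m = conj b * f ^ m := by
  induction m with
  | zero => exact ⟨1, by simp⟩
  | succ n ih =>
    obtain ⟨b, hb⟩ := ih
    refine ⟨a * f b, ?_⟩
    rw [pow_succ', hb, mul_assoc, ← mul_assoc f, mul_conj, map_mul, pow_succ']
    group

theorem smul_subgroup_eq_of_eqOn {f g : MulAut G} {P : Subgroup G} (h : Set.EqOn f g P) :
    f • P = g • P :=
  SetLike.coe_injective h.image_eq

theorem pow_smul_subgroup_eq_self {f : MulAut G} {P : Subgroup G} (h : f • P = P) (m : ℕ) :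
    (f ^ m) • P = P :=
  pow_mem (show f ∈ MulAction.stabilizer (MulAut G) P from h) m

end MulAut

/-- Here `ad_g x = g⁻¹ x g`, so `ad_{a⁻¹} ∘ φ^l = MulAut.conj a * φ^l` and the
conjugation `x ↦ a⁻¹ x a` is `MulAut.conj a⁻¹`. -/
theorem restriction_finite_order_in_out_general {ι : Type*}
    (φ : MulAut (FreeGroup ι)) (P : Subgroup (FreeGroup ι))
    (a γ : FreeGroup ι) (l k : ℕ) (hlk : l ∣ k)
    (hmap : Subgroup.map (φ ^ l).toMonoidHom P
      = Subgroup.map (MulAut.conj a⁻¹).toMonoidHom P)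
    (hγ : ∀ x ∈ P, γ⁻¹ * (φ ^ k) x * γ = x)
    (hmal : ∀ c : FreeGroup ι,
      Subgroup.map (MulAut.conj c).toMonoidHom P = P → c ∈ P) :
    ∃ p ∈ P, ∀ x ∈ P,
      ((MulAut.conj a * φ ^ l) ^ (k / l)) x = p⁻¹ * x * p := by
  set ψ := MulAut.conj a * φ ^ l
  obtain ⟨b, hb⟩ := MulAut.exists_conj_mul_pow_eq a (φ ^ l) (k / l)
  rw [← pow_mul, Nat.mul_div_cancel' hlk] at hb
  have hψ_conj : Set.EqOn (ψ ^ (k / l)) (MulAut.conj (b * γ)) P := fun x hx => by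
    have hφk : (φ ^ k) x = γ * x * γ⁻¹ :=
      calc (φ ^ k) x = γ * (γ⁻¹ * (φ ^ k) x * γ) * γ⁻¹ := by group
        _ = γ * x * γ⁻¹ := by rw [hγ x hx]
    rw [hb, MulAut.mul_apply, hφk, MulAut.conj_apply, MulAut.conj_apply]
    group
  -- The pointwise action `f • P` unfolds to `P.map f.toMonoidHom`, the form of `hmap` and `hmal`.
  have hφ_smul : (φ ^ l) • P = (MulAut.conj a)⁻¹ • P := by
    rw [← map_inv]
    exact hmap
  have hψ_stab : ψ • P = P := by rw [mul_smul, hφ_smul, smul_inv_smul]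
  have hc : b * γ ∈ P := hmal _ <| show MulAut.conj (b * γ) • P = P by
    rw [← MulAut.smul_subgroup_eq_of_eqOn hψ_conj, MulAut.pow_smul_subgroup_eq_self hψ_stab]
  exact ⟨(b * γ)⁻¹, inv_mem hc, fun x hx => by rw [hψ_conj hx, inv_inv, MulAut.conj_apply]⟩

/-- let `F` be a free group, `φ ∈ Aut(F)`, `P ≤ F` non-trivial
with `φ^l(P) = a⁻¹ P a` (`l ≥ 1`), and suppose `ad_γ ∘ φ^k` restricts to the
identity on `P` for some multiple `k` of `l`. If any element conjugating `P` to
itself lies in `P` (as holds for malnormal subgroups), then the restriction of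
`ad_{a⁻¹} ∘ φ^l` to `P` is inner on `P` at the power `k/l`; i.e. its outer
class has finite order dividing `k/l`.
Here `ad_g x = g⁻¹ x g`, so `ad_{a⁻¹} ∘ φ^l = MulAut.conj a * φ^l` and the
conjugation `x ↦ a⁻¹ x a` is `MulAut.conj a⁻¹`. -/
theorem restriction_finite_order_in_out {ι : Type*}
    (φ : MulAut (FreeGroup ι)) (P : Subgroup (FreeGroup ι)) (hP : P ≠ ⊥)
    (a γ : FreeGroup ι) (l k : ℕ) (hl : 1 ≤ l) (hlk : l ∣ k)
    (hmap : Subgroup.map (φ ^ l).toMonoidHom P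
      = Subgroup.map (MulAut.conj a⁻¹).toMonoidHom P)
    (hγ : ∀ x ∈ P, γ⁻¹ * (φ ^ k) x * γ = x)
    (hmal : ∀ c : FreeGroup ι,
      Subgroup.map (MulAut.conj c).toMonoidHom P = P → c ∈ P) :
    ∃ p ∈ P, ∀ x ∈ P,
      ((MulAut.conj a * φ ^ l) ^ (k / l)) x = p⁻¹ * x * p :=
  restriction_finite_order_in_out_general φ P a γ l k hlk hmap hγ hmal
end
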